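/- The abelianization of SL(2, ℤ) is a cyclic group of order 12. -/

import Mathlib

open Matrix MatrixGroups ModularGroup

local notation "SL2Z" => Matrix.SpecialLinearGroup (Fin 2) ℤ

/-- character of `SL(2, ZMod 3)` with values in `ZMod 3`. -/
private def chi3 (M : Matrix.SpecialLinearGroup (Fin 2) (ZMod 3)) : ZMod 3 :=
  M.1 0 1 * M.1 1 1 * (1 - (M.1 1 0)^2) + (M.1 0 0 + M.1 1 1) * M.1 1 0

/-- character of `SL(2, ZMod 4)` with values in `ZMod 4`. -/
private def chi4 (M : Matrix.SpecialLinearGroup (Fin 2) (ZMod 4)) : ZMod 4 :=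
  let a := M.1 0 0; let b := M.1 0 1; let c := M.1 1 0; let d := M.1 1 1
  1 + 3*d + 2*c*d + 2*b + 3*b*d + 3*b*c + b*c*d + 3*b*c^2 + a*c

set_option maxRecDepth 100000 in
private lemma chi3_mul : ∀ A B : Matrix.SpecialLinearGroup (Fin 2) (ZMod 3),
    chi3 (A * B) = chi3 A + chi3 B := by decide

set_option maxRecDepth 100000 in
private lemma chi4_mul : ∀ A B : Matrix.SpecialLinearGroup (Fin 2) (ZMod 4),
    chi4 (A * B) = chi4 A + chi4 B := by decide

private def hom3 : Matrix.SpecialLinearGroup (Fin 2) (ZMod 3) →* Multiplicative (ZMod 3) where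
  toFun M := Multiplicative.ofAdd (chi3 M)
  map_one' := by decide
  map_mul' A B := congrArg Multiplicative.ofAdd (chi3_mul A B)

private def hom4 : Matrix.SpecialLinearGroup (Fin 2) (ZMod 4) →* Multiplicative (ZMod 4) where
  toFun M := Multiplicative.ofAdd (chi4 M)
  map_one' := by decide
  map_mul' A B := congrArg Multiplicative.ofAdd (chi4_mul A B)

private def f3 : SL2Z →* Multiplicative (ZMod 3) :=
  hom3.comp (Matrix.SpecialLinearGroup.map (Int.castRingHom (ZMod 3)))

private def f4 : SL2Z →* Multiplicative (ZMod 4) :=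
  hom4.comp (Matrix.SpecialLinearGroup.map (Int.castRingHom (ZMod 4)))

private def crt : ZMod 12 ≃+* ZMod 3 × ZMod 4 :=
  ZMod.chineseRemainder (show Nat.Coprime 3 4 by decide)

/-- The character `SL(2,ℤ) → ZMod 12`. -/
private def F : SL2Z →* Multiplicative (ZMod 12) :=
  (AddEquiv.toMultiplicative crt.symm.toAddEquiv).toMonoidHom.comp
    (((MulEquiv.prodMultiplicative (G := ZMod 3) (H := ZMod 4)).symm).toMonoidHom.comp
      (f3.prod f4))

private lemma F_T : F T = Multiplicative.ofAdd (1 : ZMod 12) := by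
  have h3 : f3 T = Multiplicative.ofAdd (1 : ZMod 3) := by decide
  have h4 : f4 T = Multiplicative.ofAdd (1 : ZMod 4) := by decide
  have : crt.symm (1, 1) = 1 := by
    have h1 : ((1, 1) : ZMod 3 × ZMod 4) = 1 := rfl
    rw [h1, _root_.map_one]
  simp only [F, MonoidHom.comp_apply, MonoidHom.prod_apply, h3, h4]
  exact congrArg Multiplicative.ofAdd this

/-- `S` and `T` generate `SL(2, ℤ)`. -/
private lemma closure_S_T : Subgroup.closure ({S, T} : Set SL2Z) = ⊤ := by
  rw [eq_top_iff]
  intro M _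
  set G := Subgroup.closure ({S, T} : Set SL2Z) with hG
  have hS : S ∈ G := Subgroup.subset_closure (by simp)
  have hT : T ∈ G := Subgroup.subset_closure (by simp)
  suffices H : ∀ n : ℕ, ∀ M : SL2Z, (M.1 1 0).natAbs = n → M ∈ G from H _ M rfl
  intro n
  induction n using Nat.strong_induction_on with
  | _ n ih =>
    intro M hM
    by_cases hc : M.1 1 0 = 0
    · -- lower-left entry 0 : M = ± T^b
      have hdet : M.1 0 0 * M.1 1 1 - M.1 0 1 * M.1 1 0 = 1 := by
        rw [← Matrix.det_fin_two]; exact M.2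
      rw [hc, mul_zero, sub_zero] at hdet
      rcases Int.mul_eq_one_iff_eq_one_or_neg_one.mp hdet with ⟨ha, hd⟩ | ⟨ha, hd⟩
      · have : M = T ^ (M.1 0 1) := by
          refine Subtype.ext ?_
          show M.1 = (T ^ (M.1 0 1)).1
          rw [coe_T_zpow, Matrix.eta_fin_two M.1, ha, hd, hc]
          simp
        rw [this]; exact zpow_mem hT _
      · have : M = S ^ 2 * T ^ (-(M.1 0 1)) := by
          refine Subtype.ext ?_
          show M.1 = (S ^ 2 * T ^ (-(M.1 0 1)) : SL2Z).1
          have hco : (S ^ 2 * T ^ (-(M.1 0 1)) : SL2Z).1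
              = (S.1 * S.1) * (T ^ (-(M.1 0 1))).1 := by
            simp [pow_two]
          rw [hco, S_mul_S_eq, coe_T_zpow, Matrix.eta_fin_two M.1, ha, hd, hc, neg_one_mul]
          ext i j
          fin_cases i <;> fin_cases j <;> simp
        rw [this]
        exact mul_mem (pow_mem hS 2) (zpow_mem hT _)
    · -- reduce |c| using Euclidean division
      set a := M.1 0 0 with ha
      set c := M.1 1 0 with hcdef
      set q := a / c with hq
      set N := S * (T ^ (-q) * M) with hN
      have hN10 : N.1 1 0 = a % c := by
        have : N.1 = S.1 * ((T ^ (-q)).1 * M.1) := by simp [hN]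
        rw [this, coe_S, coe_T_zpow]
        rw [Matrix.eta_fin_two M.1]
        simp [Matrix.mul_fin_two, Int.emod_def]
        ring
      have hlt : (a % c).natAbs < n := by
        have h1 : 0 ≤ a % c := Int.emod_nonneg a hc
        have h2 : a % c < |c| := by rw [Int.abs_eq_natAbs]; exact Int.emod_lt a hc
        rw [Int.abs_eq_natAbs] at h2
        subst hM
        omega
      have hlt' : (N.1 1 0).natAbs < n := by rw [hN10]; exact hlt
      have hNmem : N ∈ G := ih _ hlt' N rfl
      have hMeq : M = T ^ q * (S⁻¹ * N) := by
        rw [hN, inv_mul_cancel_left, ← mul_assoc, ← _root_.zpow_add]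
        norm_num
      rw [hMeq]
      exact mul_mem (zpow_mem hT _) (mul_mem (inv_mem hS) hNmem)

private lemma ST_cube : (S * T) ^ 3 = S ^ 2 := by
  refine Subtype.ext ?_
  show ((S * T) ^ 3 : SL2Z).1 = (S ^ 2 : SL2Z).1
  simp only [Matrix.SpecialLinearGroup.coe_pow, Matrix.SpecialLinearGroup.coe_mul, coe_S, coe_T]
  norm_num [pow_succ, Matrix.mul_fin_two]

private lemma S_pow_four : S ^ 4 = 1 := by
  refine Subtype.ext ?_
  show (S ^ 4 : SL2Z).1 = (1 : SL2Z).1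
  simp only [Matrix.SpecialLinearGroup.coe_pow, coe_S, Matrix.SpecialLinearGroup.coe_one]
  norm_num [pow_succ, Matrix.mul_fin_two]
  exact Matrix.one_fin_two.symm

/-- The abelianization of `SL(2, ℤ)` is a cyclic group of order 12. -/
theorem abelianization_SL2Z_cyclic_of_order_twelve :
    Nonempty (Abelianization (Matrix.SpecialLinearGroup (Fin 2) ℤ) ≃*
      Multiplicative (ZMod 12)) := by
  set A := Abelianization SL2Z
  set t : A := Abelianization.of T with ht
  set s : A := Abelianization.of S with hs
  -- relations
  have e1 : s ^ 3 * t ^ 3 = s ^ 2 := by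
    have := congrArg Abelianization.of ST_cube
    simpa [map_pow, _root_.map_mul, mul_pow] using this
  have e2 : s * t ^ 3 = 1 := by
    apply mul_left_cancel (a := s ^ 2)
    rw [mul_one, ← mul_assoc, ← pow_succ, e1]
  have hs_eq : s = (t ^ 3)⁻¹ := eq_inv_of_mul_eq_one_left e2
  have e3 : s ^ 4 = 1 := by
    have := congrArg Abelianization.of S_pow_four
    simpa [map_pow] using this
  have t12 : t ^ 12 = 1 := by
    have h := e3
    rw [hs_eq, inv_pow, ← pow_mul, inv_eq_one] at h
    norm_num at h
    exact h
  -- every element of A is a power of t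
  have key : ∀ x : A, ∃ k : ℤ, t ^ k = x := by
    intro x
    obtain ⟨g, hg⟩ : ∃ g : SL2Z, Abelianization.of g = x := by
      obtain ⟨g, hg⟩ := Quot.exists_rep x
      exact ⟨g, (Abelianization.mk_eq_of g) ▸ hg⟩
    have hgmem : g ∈ Subgroup.closure ({S, T} : Set SL2Z) := by
      rw [closure_S_T]; trivial
    rw [← Subgroup.mem_zpowers_iff, ← hg]
    refine Subgroup.closure_induction ?_ ?_ ?_ ?_ hgmem
    · rintro y (rfl | rfl)
      · rw [← hs, hs_eq]
        exact inv_mem (pow_mem (Subgroup.mem_zpowers t) 3)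
      · exact Subgroup.mem_zpowers t
    · rw [_root_.map_one]; exact one_mem _
    · intro x y _ _ hx hy
      rw [_root_.map_mul]; exact mul_mem hx hy
    · intro x _ hx
      rw [_root_.map_inv]; exact inv_mem hx
  -- the induced hom on the abelianization
  set φ : A →* Multiplicative (ZMod 12) := Abelianization.lift F with hφ
  have φt : φ t = Multiplicative.ofAdd (1 : ZMod 12) := by
    rw [ht]; exact (Abelianization.lift_apply_of F T).trans F_T
  have φt_pow : ∀ k : ℤ, φ (t ^ k) = Multiplicative.ofAdd ((k : ZMod 12)) := by
    intro k
    rw [map_zpow, φt, ← ofAdd_zsmul]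
    norm_num
  have hinj : Function.Injective φ := by
    rw [injective_iff_map_eq_one]
    intro x hx
    obtain ⟨k, rfl⟩ := key x
    rw [φt_pow] at hx
    have : (k : ZMod 12) = 0 := hx
    obtain ⟨m, rfl⟩ := (ZMod.intCast_zmod_eq_zero_iff_dvd k 12).mp this
    have h12 : t ^ ((12 : ℕ) : ℤ) = 1 := by rw [zpow_natCast, t12]
    rw [_root_.zpow_mul, h12, _root_.one_zpow]
  have hsurj : Function.Surjective φ := by
    intro x
    refine ⟨t ^ ((x.toAdd).val : ℤ), ?_⟩
    rw [φt_pow]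
    have : ((((x.toAdd).val : ℤ) : ZMod 12)) = x.toAdd := by
      push_cast
      simp [ZMod.natCast_val, ZMod.cast_id]
    rw [this]
    rfl
  exact ⟨MulEquiv.ofBijective φ ⟨hinj, hsurj⟩⟩
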